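/- arXiv:2307.16260 — 6 statements merged into one kernel-verified Lean document; each statement's English description precedes it below -/
import Mathlib

section
/- Let $L$ be a Lie algebra over a field of characteristic $p > 2$. If $c_1, c_2 \in L$ both satisfy $(\operatorname{ad} c_i)^2 = 0$, then $(\operatorname{ad} [c_1, c_2])^2 = 0$; that is, the set of sandwich elements of $L$ is closed under taking Lie brackets. -/
/-!
In terms of `A = ad c₁` and `B = ad c₂` we have `ad ⁅c₁, c₂⁆ = AB - BA`, and expanding
`(AB - BA)²` leaves only terms containing `A²`, `B²`, `ABA` or `BAB`. For a sandwich `c`,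
`0 = ad ⁅c, ⁅c, x⁆⁆ = A²X - 2AXA + XA² = -2AXA` with `A = ad c`, `X = ad x`; since `2` is
invertible, `AXA = 0`, so `ABA = BAB = 0`.
-/

section Ring

variable {R : Type*} [Ring R] {a b : R}

theorem mul_mul_eq_zero_of_sq_eq_zero (h2 : IsLeftRegular (2 : R)) (ha : a ^ 2 = 0)
    (hab : a * (a * b - b * a) - (a * b - b * a) * a = 0) : a * b * a = 0 := by
  have expand : a * (a * b - b * a) - (a * b - b * a) * a =
      a ^ 2 * b - 2 * (a * b * a) + b * a ^ 2 := by
    noncomm_ring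
  rw [expand, ha, zero_mul, mul_zero, zero_sub, add_zero, neg_eq_zero] at hab
  exact h2 (hab.trans (mul_zero 2).symm)

theorem commutator_sq_eq_zero (ha : a ^ 2 = 0) (hb : b ^ 2 = 0) (hab : a * b * a = 0)
    (hba : b * a * b = 0) : (a * b - b * a) ^ 2 = 0 := by
  have expand : (a * b - b * a) ^ 2 =
      a * b * a * b - a * b ^ 2 * a - b * a ^ 2 * b + b * a * b * a := by
    noncomm_ring
  rw [expand, ha, hb, hab, hba]
  noncomm_ring

end Ring

namespace LieAlgebra

variable {k L : Type*} [CommRing k] [LieRing L] [LieAlgebra k L]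

theorem ad_lie_eq_mul_sub_mul (x y : L) :
    ad k L ⁅x, y⁆ = ad k L x * ad k L y - ad k L y * ad k L x := by
  ext z
  simp

theorem ad_mul_ad_mul_ad_eq_zero (h2 : IsUnit (2 : k)) {c : L} (hc : ad k L c ^ 2 = 0) (x : L) :
    ad k L c * ad k L x * ad k L c = 0 := by
  refine mul_mul_eq_zero_of_sq_eq_zero ?_ hc ?_
  · simpa only [map_ofNat] using (h2.map (algebraMap k (Module.End k L))).isRegular.left
  · have hccx : ⁅c, ⁅c, x⁆⁆ = (ad k L c ^ 2) x := by
      rw [sq, Module.End.mul_apply, ad_apply, ad_apply]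
    rw [← ad_lie_eq_mul_sub_mul, ← ad_lie_eq_mul_sub_mul, hccx, hc, LinearMap.zero_apply,
      map_zero]

end LieAlgebra

/-- In characteristic `p > 2`, the set of sandwich elements
(elements `c` with `(ad c)^2 = 0`) is closed under taking Lie brackets. -/
theorem sandwich_bracket {k L : Type*} [Field k] [LieRing L] [LieAlgebra k L]
    (p : ℕ) [CharP k p] (hp : 2 < p) (c₁ c₂ : L)
    (h₁ : (LieAlgebra.ad k L c₁) ^ 2 = 0) (h₂ : (LieAlgebra.ad k L c₂) ^ 2 = 0) :
    (LieAlgebra.ad k L ⁅c₁, c₂⁆) ^ 2 = 0 := by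
  have h2 : IsUnit (2 : k) := by
    refine isUnit_iff_ne_zero.mpr fun h ↦ ?_
    have := Nat.le_of_dvd two_pos ((CharP.cast_eq_zero_iff k p 2).mp (mod_cast h))
    omega
  rw [LieAlgebra.ad_lie_eq_mul_sub_mul]
  exact commutator_sq_eq_zero h₁ h₂ (LieAlgebra.ad_mul_ad_mul_ad_eq_zero h2 h₁ c₂)
    (LieAlgebra.ad_mul_ad_mul_ad_eq_zero h2 h₂ c₁)
end

section
/- Let $\mathcal{L}$ be a finite dimensional restricted Lie algebra over an algebraically closed field of characteristic $p > 0$, and let $V$ be a finite dimensional faithful restricted $\mathcal{L}$-module with representation $\rho: \mathcal{L} \to \mathfrak{gl}(V)$ such that $\mathfrak{gl}(V) = \rho(\mathcal{L}) \oplus R$ for some subspace $R$ with $[\rho(\mathcal{L}), R] \subseteq R$. Then for any nilpotent element $e \in \mathcal{L}$ there exists a semisimple element $h \in \mathcal{L}$ such that $[h, e] = e$. -/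
/-!
The nilpotent endomorphism `ρ e` lies in the image of `ad (ρ e)`: the trace form on `gl(V)` is
nondegenerate and invariant, so that image is the orthogonal of the centraliser of `ρ e`, and
`tr (C ρ(e)) = 0` for every `C` commuting with `ρ e`. This gives `D ∈ gl(V)` with
`⁅D, ρ e⁆ = ρ e`. Writing `D = ρ h + r` with `r ∈ R`, the difference `ρ (⁅h, e⁆ - e) = ⁅ρ e, r⁆`
lies in `ρ(L) ∩ R = 0`, so `⁅h, e⁆ = e`. Since `ad h^{[p]} = (ad h)^p`, every `h^{[p]^m}` still
satisfies this, and for `m` large `h^{[p]^m}` is semisimple because the spans of the tails of the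
sequence `(h^{[p]^i})ᵢ` form a decreasing chain of subspaces of `L`, which stabilises.
-/

/-- A `[p]`-structure (restricted Lie algebra structure) on a Lie algebra `L`:
a `p`-operation `pow` such that `ad (pow x) = (ad x)^p`, `pow (t • x) = t^p • pow x`,
and `pow (x + y) - pow x - pow y` lies in the Lie subalgebra generated by `x` and `y`
(as guaranteed by Jacobson's formula). -/
structure PStruct (k L : Type*) [Field k] [LieRing L] [LieAlgebra k L] (p : ℕ) where
  pow : L → L
  ad_pow : ∀ x : L, LieAlgebra.ad k L (pow x) = (LieAlgebra.ad k L x) ^ p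
  pow_smul : ∀ (t : k) (x : L), pow (t • x) = t ^ p • pow x
  pow_add_mem : ∀ x y : L, pow (x + y) - pow x - pow y ∈ LieSubalgebra.lieSpan k L {x, y}

variable {k L : Type*} [Field k] [LieRing L] [LieAlgebra k L] {p : ℕ}

/-- An element is nilpotent if some iterate of the `p`-operation kills it. -/
def PStruct.IsNil (P : PStruct k L p) (x : L) : Prop := ∃ N : ℕ, P.pow^[N] x = 0

/-- An element is semisimple if it lies in the span of its iterated `p`-th powers
`x^{[p]^i}`, `i ≥ 1`. -/
def PStruct.IsSs (P : PStruct k L p) (x : L) : Prop :=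
  x ∈ Submodule.span k (Set.range fun i : ℕ => P.pow^[i + 1] x)

attribute [local instance 100] LieRing.ofAssociativeRing

section TraceForm

open LinearMap

variable {K V : Type*} [Field K] [AddCommGroup V] [Module K V]

noncomputable def LinearMap.traceMul : Module.End K V →ₗ[K] Module.Dual K (Module.End K V) :=
  (LinearMap.mul K (Module.End K V)).compr₂ (trace K V)

@[simp]
theorem LinearMap.traceMul_apply (C Y : Module.End K V) : traceMul C Y = trace K V (C * Y) := rfl

variable [FiniteDimensional K V]

theorem LinearMap.eq_zero_of_forall_trace_mul_eq_zero {C : Module.End K V}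
    (h : ∀ Y : Module.End K V, trace K V (C * Y) = 0) : C = 0 := by
  by_contra hC
  obtain ⟨v, hv⟩ : ∃ v, C v ≠ 0 := not_forall.mp fun h' => hC (LinearMap.ext h')
  obtain ⟨φ, hφ⟩ : ∃ φ : Module.Dual K V, φ (C v) ≠ 0 :=
    not_forall.mp fun h' => hv ((Module.forall_dual_apply_eq_zero_iff K (C v)).mp h')
  have hcomp : C * dualTensorHom K V V (φ ⊗ₜ v) = dualTensorHom K V V (φ ⊗ₜ C v) := by
    ext x; simp [dualTensorHom_apply]
  apply hφ
  simpa [hcomp, trace_eq_contract_apply] using h (dualTensorHom K V V (φ ⊗ₜ v))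

theorem LinearMap.traceMul_surjective :
    Function.Surjective (traceMul : Module.End K V → Module.Dual K (Module.End K V)) := by
  refine (injective_iff_surjective_of_finrank_eq_finrank Subspace.dual_finrank_eq.symm).mp ?_
  rw [← ker_eq_bot, eq_bot_iff]
  exact fun C hC => eq_zero_of_forall_trace_mul_eq_zero fun Y => LinearMap.congr_fun hC Y

theorem LinearMap.mem_range_ad_self_of_isNilpotent {N : Module.End K V} (hN : IsNilpotent N) :
    N ∈ range (LieAlgebra.ad K (Module.End K V) N) := by
  rw [← Subspace.forall_mem_dualAnnihilator_apply_eq_zero_iff]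
  intro φ hφ
  obtain ⟨C, rfl⟩ := traceMul_surjective φ
  have hcomm : Commute C N := by
    refine sub_eq_zero.mp (eq_zero_of_forall_trace_mul_eq_zero fun Y => ?_)
    have h := (Submodule.mem_dualAnnihilator _).mp hφ _ ⟨Y, rfl⟩
    simp only [traceMul_apply, LieAlgebra.ad_apply, Ring.lie_def, map_sub] at h
    rw [sub_mul, map_sub, mul_assoc, mul_assoc, trace_mul_comm K N, mul_assoc, ← h]
  simpa [isNilpotent_iff_eq_zero] using
    isNilpotent_trace_of_isNilpotent (hcomm.isNilpotent_mul_left hN)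

theorem LinearMap.exists_lie_eq_self_of_isNilpotent {N : Module.End K V} (hN : IsNilpotent N) :
    ∃ D : Module.End K V, ⁅D, N⁆ = N := by
  obtain ⟨D, hD⟩ := mem_range_ad_self_of_isNilpotent hN
  exact ⟨-D, by rw [neg_lie, ← lie_skew]; simpa using hD⟩

end TraceForm

theorem exists_iterate_mem_span_iterate_succ {R M : Type*} [Ring R] [AddCommGroup M]
    [Module R M] [IsArtinian R M] (g : M → M) (x : M) :
    ∃ m, g^[m] x ∈ Submodule.span R (Set.range fun i : ℕ => g^[i + 1] (g^[m] x)) := by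
  have hshift : ∀ m i, g^[i] (g^[m + 1] x) = g^[i + 1] (g^[m] x) := fun m i => by
    rw [Function.iterate_succ_apply' g m, Function.iterate_succ_apply g i]
  let W : ℕ → Submodule R M := fun m => Submodule.span R (Set.range fun i => g^[i] (g^[m] x))
  have hW : Antitone W := antitone_nat_of_succ_le fun m =>
    Submodule.span_le.mpr <| by
      rintro _ ⟨i, rfl⟩
      exact Submodule.subset_span ⟨i + 1, (hshift m i).symm⟩
  obtain ⟨n, hn⟩ := IsArtinian.monotone_stabilizes ⟨fun m => OrderDual.toDual (W m), hW⟩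
  refine ⟨n, ?_⟩
  have hstab : W n = W (n + 1) := hn (n + 1) n.le_succ
  simp only [W, hshift] at hstab
  exact hstab ▸ Submodule.subset_span ⟨0, rfl⟩

namespace PStruct

variable (P : PStruct k L p)

theorem lie_pow_eq_self {h e : L} (he : ⁅h, e⁆ = e) : ⁅P.pow h, e⁆ = e := by
  rw [← LieAlgebra.ad_apply (R := k), P.ad_pow, Module.End.pow_apply]
  exact Function.iterate_fixed he p

theorem lie_iterate_pow_eq_self {h e : L} (he : ⁅h, e⁆ = e) (m : ℕ) :
    ⁅P.pow^[m] h, e⁆ = e := by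
  induction m with
  | zero => exact he
  | succ m ih => rw [Function.iterate_succ_apply']; exact P.lie_pow_eq_self ih

theorem exists_isSs_iterate [FiniteDimensional k L] (x : L) : ∃ m, P.IsSs (P.pow^[m] x) :=
  exists_iterate_mem_span_iterate_succ P.pow x

variable {A : Type*} [Ring A] [Algebra k A] {P}

theorem map_iterate_pow {ρ : L →ₗ⁅k⁆ A} (hres : ∀ x, ρ (P.pow x) = ρ x ^ p) (m : ℕ) (x : L) :
    ρ (P.pow^[m] x) = ρ x ^ p ^ m := by
  induction m generalizing x with
  | zero => simp
  | succ m ih => rw [Function.iterate_succ_apply, ih, hres, ← pow_mul, ← pow_succ']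

theorem IsNil.isNilpotent_map {ρ : L →ₗ⁅k⁆ A} (hres : ∀ x, ρ (P.pow x) = ρ x ^ p) {e : L}
    (he : P.IsNil e) : IsNilpotent (ρ e) := by
  obtain ⟨n, hn⟩ := he
  exact ⟨p ^ n, by rw [← map_iterate_pow hres, hn, map_zero]⟩

end PStruct

theorem LieHom.exists_lie_eq_of_isCompl {L' : Type*} [LieRing L'] [LieAlgebra k L']
    {ρ : L →ₗ⁅k⁆ L'} (hρ : Function.Injective ρ) {R : Submodule k L'}
    (hcompl : IsCompl ρ.range.toSubmodule R) {e y : L} (hinv : ∀ r ∈ R, ⁅ρ e, r⁆ ∈ R)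
    {D : L'} (hD : ⁅D, ρ e⁆ = ρ y) : ∃ h : L, ⁅h, e⁆ = y := by
  obtain ⟨_, ⟨h, rfl⟩, r, hr, rfl⟩ :=
    Submodule.mem_sup.mp (hcompl.sup_eq_top ▸ Submodule.mem_top : D ∈ _ ⊔ R)
  change ⁅ρ h + r, ρ e⁆ = ρ y at hD
  refine ⟨h, sub_eq_zero.mp (hρ ?_)⟩
  have hR : ρ (⁅h, e⁆ - y) = ⁅ρ e, r⁆ := by
    rw [map_sub, LieHom.map_lie, ← hD, add_lie, ← lie_skew r]
    abel
  rw [map_zero]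
  exact Submodule.disjoint_def.mp hcompl.disjoint _ ⟨_, rfl⟩ (hR ▸ hinv r hr)

theorem exists_semisimple_of_richardson_general
    [FiniteDimensional k L]
    (P : PStruct k L p)
    (V : Type*) [AddCommGroup V] [Module k V] [FiniteDimensional k V]
    (ρ : L →ₗ⁅k⁆ Module.End k V)
    (hfaith : Function.Injective ρ)
    (hres : ∀ x : L, ρ (P.pow x) = (ρ x) ^ p)
    (R : Submodule k (Module.End k V))
    (hcompl : IsCompl (LieHom.range ρ).toSubmodule R)
    (hinv : ∀ x : L, ∀ r ∈ R, ⁅ρ x, r⁆ ∈ R)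
    (e : L) (he : P.IsNil e) :
    ∃ h : L, P.IsSs h ∧ ⁅h, e⁆ = e := by
  obtain ⟨D, hD⟩ := LinearMap.exists_lie_eq_self_of_isNilpotent (he.isNilpotent_map hres)
  obtain ⟨h, hh⟩ := LieHom.exists_lie_eq_of_isCompl hfaith hcompl (hinv e) hD
  obtain ⟨m, hm⟩ := P.exists_isSs_iterate h
  exact ⟨P.pow^[m] h, hm, P.lie_iterate_pow_eq_self hh m⟩

/-- If a finite dimensional restricted Lie algebra `L` over an algebraically
closed field of characteristic `p > 0` has a faithful restricted module `V` with
`gl(V) = ρ(L) ⊕ R` and `[ρ(L), R] ⊆ R`, then for every nilpotent `e ∈ L` there is a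
semisimple `h ∈ L` with `[h, e] = e`. -/
theorem exists_semisimple_of_richardson
    [IsAlgClosed k] [CharP k p] (hp : 0 < p) [FiniteDimensional k L]
    (P : PStruct k L p)
    (V : Type*) [AddCommGroup V] [Module k V] [FiniteDimensional k V]
    (ρ : L →ₗ⁅k⁆ Module.End k V)
    (hfaith : Function.Injective ρ)
    (hres : ∀ x : L, ρ (P.pow x) = (ρ x) ^ p)
    (R : Submodule k (Module.End k V))
    (hcompl : IsCompl (LieHom.range ρ).toSubmodule R)
    (hinv : ∀ x : L, ∀ r ∈ R, ⁅ρ x, r⁆ ∈ R)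
    (e : L) (he : P.IsNil e) :
    ∃ h : L, P.IsSs h ∧ ⁅h, e⁆ = e :=
  exists_semisimple_of_richardson_general P V ρ hfaith hres R hcompl hinv e he
end

section
/- Let $\mathcal{L}$ be a finite dimensional restricted Lie algebra over an algebraically closed field of characteristic $p > 2$, embedded as a restricted subalgebra $\mathcal{L} \subseteq \mathfrak{gl}(V)$ with $\mathfrak{gl}(V) = \mathcal{L} \oplus R$ for some subspace $R$ satisfying $[\mathcal{L}, R] \subseteq R$. Then every nilpotent element $e \in \mathcal{L}$ lies in the subspace $[e, [e, \mathcal{L}]]$. -/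
attribute [local instance 100] LieRing.ofAssociativeRing

/-
Over a field of characteristic `≠ 2` every nilpotent `e ∈ 𝔤𝔩(V)` satisfies `e = ⁅e, ⁅e, x⁆⁆` for
some `x ∈ 𝔤𝔩(V)`. Indeed, if `e ^ (n - 1) v ≠ 0 = e ^ n` and `φ (e ^ (n - 1) v) ≠ 0`, the block
spanned by `v, e v, …, e ^ (n - 1) v` has the `e`-stable complement
`{w | ∀ i < n, φ (e ^ i w) = 0}`, so by induction on `dim V` it suffices to treat one block, where
`x (e ^ i v) = i (i - n) / 2 • e ^ (i - 1) v` works. Both `L` and `R` are stable under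
`(ad e) ^ 2`, so the `L`-component of `x` still solves the equation.
-/

open Module LinearMap Submodule

section
variable {R M A : Type*} [Ring R] [AddCommGroup M] [Module R M] [AddCommGroup A] [Module R A]

theorem isCompl_range_ker_of_bijective_comp {Γ : A →ₗ[R] M} {Φ : M →ₗ[R] A}
    (h : Function.Bijective (Φ ∘ₗ Γ)) : IsCompl (range Γ) (ker Φ) := by
  refine ⟨disjoint_def.2 ?_, codisjoint_iff.2 (eq_top_iff.2 fun z _ ↦ ?_)⟩
  · rintro _ ⟨a, rfl⟩ ha
    rw [h.1 (show (Φ ∘ₗ Γ) a = (Φ ∘ₗ Γ) 0 by simpa using ha), map_zero]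
  · obtain ⟨a, ha⟩ := h.2 (Φ z)
    exact mem_sup.2 ⟨Γ a, ⟨a, rfl⟩, z - Γ a, by simp [← ha], add_sub_cancel _ _⟩

theorem exists_mem_apply_eq_of_isCompl {U W : Submodule R M} (hUW : IsCompl U W)
    {T : Module.End R M} (hU : ∀ u ∈ U, T u ∈ U) (hW : ∀ w ∈ W, T w ∈ W) {y : M} (hy : y ∈ U)
    (x : M) (hx : T x = y) : ∃ u ∈ U, T u = y := by
  obtain ⟨u, w, hu, hw, rfl⟩ := codisjoint_iff_exists_add_eq.1 hUW.codisjoint x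
  have hTw : T w = y - T u := by rw [← hx, map_add, add_sub_cancel_left]
  have : T w = 0 := disjoint_def'.1 hUW.disjoint _ (hTw ▸ sub_mem hy (hU u hu)) _
    (hW w hw) rfl
  exact ⟨u, hu, by rw [← hx, map_add, this, add_zero]⟩
end

section
variable {R M : Type*} [Semiring R] [AddCommMonoid M] [Module R M] {e : Module.End R M} {v : M}
  {m n : ℕ}

theorem coe_pow_restrict_apply {p : Submodule R M} (h : ∀ x ∈ p, e x ∈ p) (n : ℕ) (x : p) :
    (((e.restrict h) ^ n) x : M) = (e ^ n) x := by
  rw [Module.End.pow_restrict, coe_restrict_apply]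

theorem pow_apply_eq_zero_of_le (hn : (e ^ n) v = 0) (h : n ≤ m) : (e ^ m) v = 0 := by
  obtain ⟨j, rfl⟩ := Nat.exists_eq_add_of_le h
  rw [add_comm, pow_add, Module.End.mul_apply, hn, map_zero]
end

section
variable {R M : Type*} [CommRing R] [AddCommGroup M] [Module R M]

theorem exists_lie_lie_eq_self_of_isCompl {U W : Submodule R M} (hUW : IsCompl U W)
    {e : Module.End R M} (hU : ∀ u ∈ U, e u ∈ U) (hW : ∀ w ∈ W, e w ∈ W)
    (hxU : ∃ x, ⁅e.restrict hU, ⁅e.restrict hU, x⁆⁆ = e.restrict hU)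
    (hxW : ∃ x, ⁅e.restrict hW, ⁅e.restrict hW, x⁆⁆ = e.restrict hW) :
    ∃ x, ⁅e, ⁅e, x⁆⁆ = e := by
  obtain ⟨xU, hxU⟩ := hxU
  obtain ⟨xW, hxW⟩ := hxW
  let glue : Module.End R U × Module.End R W →ₗ⁅R⁆ Module.End R M :=
    (prodEquivOfIsCompl U W hUW).lieConj.toLieHom.comp
      (LinearMap.prodMapAlgHom R U W).toLieHom
  have he : glue (e.restrict hU, e.restrict hW) = e := by
    ext z
    obtain ⟨p, rfl⟩ := (prodEquivOfIsCompl U W hUW).surjective z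
    simp [glue, LinearEquiv.conj_apply]
  refine ⟨glue (xU, xW), ?_⟩
  rw [← he, ← glue.map_lie, ← glue.map_lie]
  congr 1
  exact Prod.ext hxU hxW

theorem lie_lie_apply_of_shift {e x : Module.End R M} {f : ℕ → M} (hf : ∀ i, e (f i) = f (i + 1))
    {c : ℕ → R} (hc0 : c 0 = 0) (hc : ∀ i, c i - 2 * c (i + 1) + c (i + 2) = 1)
    (hx : ∀ i, x (f i) = c i • f (i - 1)) (i : ℕ) : ⁅e, ⁅e, x⁆⁆ (f i) = f (i + 1) := by
  have hex (i : ℕ) : ⁅e, x⁆ (f i) = (c i - c (i + 1)) • f i := by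
    rcases i with _ | i
    · simp [Ring.lie_def, hf, hx, hc0]
    · simp [Ring.lie_def, hf, hx, sub_smul]
  rw [Ring.lie_def, LinearMap.sub_apply, Module.End.mul_apply, Module.End.mul_apply, hex,
    map_smul, hf, hex, ← sub_smul, show c i - c (i + 1) - (c (i + 1) - c (i + 1 + 1)) = 1 by
      linear_combination hc i, one_smul]
end

section
variable {k U : Type*} [Field k] [AddCommGroup U] [Module k U]

theorem exists_lie_lie_eq_self_of_basis_pow_apply (h2 : (2 : k) ≠ 0) {e : Module.End k U} {v : U}
    {n : ℕ} (hn : (e ^ n) v = 0) (b : Basis (Fin n) k U) (hb : ∀ i, b i = (e ^ (i : ℕ)) v) :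
    ∃ x, ⁅e, ⁅e, x⁆⁆ = e := by
  let f (i : ℕ) := (e ^ i) v
  have hf (i : ℕ) : e (f i) = f (i + 1) := by simp [f, pow_succ']
  have hfn {i : ℕ} (hi : n ≤ i) : f i = 0 := pow_apply_eq_zero_of_le hn hi
  -- `c` vanishes at `0` and at `n` (so `x` is consistent past the block) and has second
  -- difference `1`
  let c (i : ℕ) : k := i * (i - n) / 2
  let x := b.constr k fun i ↦ c i • f (i - 1)
  have hx (i : ℕ) : x (f i) = c i • f (i - 1) := by
    rcases lt_or_ge i n with hi | hi
    · simpa only [hb] using b.constr_basis k (fun i ↦ c i • f (i - 1)) ⟨i, hi⟩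
    rcases hi.eq_or_lt with rfl | hi
    · simp [hfn le_rfl, c]
    · simp [hfn hi.le, hfn (Nat.le_sub_one_of_lt hi)]
  refine ⟨x, b.ext fun i ↦ ?_⟩
  rw [hb]
  change ⁅e, ⁅e, x⁆⁆ (f i) = e (f i)
  rw [hf, lie_lie_apply_of_shift hf (by simp [c]) (fun i ↦ ?_) hx]
  simp only [c]
  push_cast
  field_simp
  ring
end

section
variable {k V : Type*} [Field k] [AddCommGroup V] [Module k V] {e : Module.End k V} {v : V}
  {n : ℕ}

theorem pow_sub_one_sub_apply_sum (hn : (e ^ n) v = 0) {a : Fin n → k} {i : Fin n}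
    (ha : ∀ j < i, a j = 0) :
    (e ^ (n - 1 - i)) (∑ j, a j • (e ^ (j : ℕ)) v) = a i • (e ^ (n - 1)) v := by
  have hpow (j : Fin n) : (e ^ (n - 1 - i)) ((e ^ (j : ℕ)) v) = (e ^ (n - 1 - i + j)) v := by
    rw [pow_add, Module.End.mul_apply]
  rw [map_sum, Finset.sum_eq_single i (fun j _ hji ↦ ?_) (by simp), map_smul, hpow,
    Nat.sub_add_cancel (by omega)]
  rcases lt_or_gt_of_ne hji with hj | hj
  · rw [ha j hj, zero_smul, map_zero]
  · rw [map_smul, hpow, pow_apply_eq_zero_of_le hn (by omega), smul_zero]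

theorem injective_pi_comp_linearCombination_pow_apply (hn : (e ^ n) v = 0) {φ : Dual k V}
    (hφ : φ ((e ^ (n - 1)) v) ≠ 0) :
    Function.Injective ((pi fun i : Fin n ↦ φ ∘ₗ e ^ (i : ℕ)) ∘ₗ
      Fintype.linearCombination k fun i : Fin n ↦ (e ^ (i : ℕ)) v) := by
  rw [← ker_eq_bot, eq_bot_iff]
  intro a ha
  funext i
  induction i using WellFoundedLT.induction with | _ i ih => ?_
  have := congr_fun (mem_ker.1 ha) ⟨n - 1 - i, by omega⟩
  simp only [comp_apply, pi_apply, Fintype.linearCombination_apply, Pi.zero_apply,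
    pow_sub_one_sub_apply_sum hn ih, map_smul, smul_eq_mul] at this
  exact (mul_eq_zero.1 this).resolve_right hφ

theorem linearIndependent_pow_apply (hn : (e ^ n) v = 0) (hv : (e ^ (n - 1)) v ≠ 0) :
    LinearIndependent k fun i : Fin n ↦ (e ^ (i : ℕ)) v := by
  obtain ⟨φ, hφ⟩ := Projective.exists_dual_ne_zero k hv
  have h := injective_pi_comp_linearCombination_pow_apply hn hφ
  rw [coe_comp] at h
  exact linearIndependent_iff_injective_fintypeLinearCombination.2 h.of_comp

theorem isCompl_span_pow_apply_ker_pi (hn : (e ^ n) v = 0) {φ : Dual k V}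
    (hφ : φ ((e ^ (n - 1)) v) ≠ 0) :
    IsCompl (span k (Set.range fun i : Fin n ↦ (e ^ (i : ℕ)) v))
      (ker (pi fun i : Fin n ↦ φ ∘ₗ e ^ (i : ℕ))) := by
  have h := injective_pi_comp_linearCombination_pow_apply hn hφ
  rw [← Fintype.range_linearCombination]
  exact isCompl_range_ker_of_bijective_comp ⟨h, injective_iff_surjective.1 h⟩

theorem apply_mem_span_pow_apply (hn : (e ^ n) v = 0) :
    ∀ u ∈ span k (Set.range fun i : Fin n ↦ (e ^ (i : ℕ)) v),
      e u ∈ span k (Set.range fun i : Fin n ↦ (e ^ (i : ℕ)) v) := by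
  refine fun u hu ↦ mem_comap.1 (span_le.2 (Set.range_subset_iff.2 fun i ↦ ?_) hu)
  rw [SetLike.mem_coe, mem_comap, ← Module.End.mul_apply, ← pow_succ']
  by_cases hi : (i : ℕ) + 1 < n
  · exact subset_span ⟨⟨i + 1, hi⟩, rfl⟩
  · rw [pow_apply_eq_zero_of_le hn (by omega)]
    exact zero_mem _

theorem apply_mem_ker_pi (hn : e ^ n = 0) (φ : Dual k V) :
    ∀ w ∈ ker (pi fun i : Fin n ↦ φ ∘ₗ e ^ (i : ℕ)),
      e w ∈ ker (pi fun i : Fin n ↦ φ ∘ₗ e ^ (i : ℕ)) := by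
  intro w hw
  simp only [mem_ker, funext_iff, pi_apply, comp_apply, Pi.zero_apply] at hw ⊢
  intro i
  rw [← Module.End.mul_apply, ← pow_succ]
  by_cases hi : (i : ℕ) + 1 < n
  · exact hw ⟨i + 1, hi⟩
  · rw [pow_eq_zero_of_le (by omega) hn, LinearMap.zero_apply, map_zero]
end

section
variable {k V : Type*} [Field k] [AddCommGroup V] [Module k V]

theorem exists_lie_lie_eq_self_of_isNilpotent [FiniteDimensional k V] (h2 : (2 : k) ≠ 0)
    {e : Module.End k V} (he : IsNilpotent e) : ∃ x, ⁅e, ⁅e, x⁆⁆ = e := by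
  induction hd : finrank k V using Nat.strong_induction_on generalizing V with | _ d ih => ?_
  rcases subsingleton_or_nontrivial V with hV | hV
  · exact ⟨0, Subsingleton.elim _ _⟩
  set n := nilpotencyClass e
  have hn : e ^ n = 0 := pow_nilpotencyClass he
  obtain ⟨v, hv⟩ : ∃ v, (e ^ (n - 1)) v ≠ 0 := DFunLike.ne_iff.1 (pow_pred_nilpotencyClass he)
  obtain ⟨φ, hφ⟩ := Projective.exists_dual_ne_zero k hv
  have hnv : (e ^ n) v = 0 := by rw [hn, LinearMap.zero_apply]
  set U := span k (Set.range fun i : Fin n ↦ (e ^ (i : ℕ)) v)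
  have hUW : IsCompl U (ker (pi fun i : Fin n ↦ φ ∘ₗ e ^ (i : ℕ))) :=
    isCompl_span_pow_apply_ker_pi hnv hφ
  have hli := linearIndependent_pow_apply hnv hv
  refine exists_lie_lie_eq_self_of_isCompl hUW (apply_mem_span_pow_apply hnv)
    (apply_mem_ker_pi hn φ) ?_ ?_
  · have hvU : v ∈ U := subset_span ⟨⟨0, pos_nilpotencyClass_iff.2 he⟩, by simp⟩
    refine exists_lie_lie_eq_self_of_basis_pow_apply h2 (v := ⟨v, hvU⟩) ?_ (Basis.span hli)
      fun i ↦ ?_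
    · apply Subtype.ext
      rw [coe_pow_restrict_apply, hnv, ZeroMemClass.coe_zero]
    · apply Subtype.ext
      rw [coe_pow_restrict_apply, Basis.span_apply]
  · refine ih _ ?_ (Module.End.isNilpotent.restrict _ he) rfl
    have := finrank_add_eq_of_isCompl hUW
    rw [finrank_span_eq_card hli, Fintype.card_fin] at this
    have := pos_nilpotencyClass_iff.2 he
    omega
end

theorem nilpotent_mem_double_bracket_general {k : Type*} [Field k]
    {p : ℕ} [CharP k p] (hp : 2 < p)
    (V : Type*) [AddCommGroup V] [Module k V] [FiniteDimensional k V]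
    (L : LieSubalgebra k (Module.End k V))
    (R : Submodule k (Module.End k V))
    (hcompl : IsCompl L.toSubmodule R)
    (hinv : ∀ x ∈ L, ∀ r ∈ R, ⁅x, r⁆ ∈ R)
    (e : Module.End k V) (heL : e ∈ L) (he : ∃ N : ℕ, e ^ (p ^ N) = 0) :
    ∃ x ∈ L, e = ⁅e, ⁅e, x⁆⁆ := by
  have h2 : (2 : k) ≠ 0 := Ring.two_ne_zero (by rw [ringChar.eq k p]; omega)
  obtain ⟨N, hN⟩ := he
  obtain ⟨x, hx⟩ := exists_lie_lie_eq_self_of_isNilpotent h2 ⟨p ^ N, hN⟩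
  let ad2 := LieAlgebra.ad k _ e ^ 2
  obtain ⟨a, haL, ha⟩ := exists_mem_apply_eq_of_isCompl hcompl (T := ad2)
    (fun a ha ↦ by simpa [ad2, sq] using L.lie_mem heL (L.lie_mem heL ha))
    (fun r hr ↦ by simpa [ad2, sq] using hinv e heL _ (hinv e heL r hr)) heL x
    (by simpa [ad2, sq] using hx)
  exact ⟨a, haL, by simpa [ad2, sq] using ha.symm⟩

/-- Let `L ⊆ gl(V)` be a restricted Lie subalgebra (i.e. closed under the
`p`-th power of endomorphisms) over an algebraically closed field of characteristic
`p > 2`, with `gl(V) = L ⊕ R` for a subspace `R` satisfying `[L, R] ⊆ R`. Then every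
nilpotent `e ∈ L` lies in `[e, [e, L]]`. -/
theorem nilpotent_mem_double_bracket {k : Type*} [Field k] [IsAlgClosed k]
    {p : ℕ} [CharP k p] (hp : 2 < p)
    (V : Type*) [AddCommGroup V] [Module k V] [FiniteDimensional k V]
    (L : LieSubalgebra k (Module.End k V))
    (hrestricted : ∀ x ∈ L, x ^ p ∈ L)
    (R : Submodule k (Module.End k V))
    (hcompl : IsCompl L.toSubmodule R)
    (hinv : ∀ x ∈ L, ∀ r ∈ R, ⁅x, r⁆ ∈ R)
    (e : Module.End k V) (heL : e ∈ L) (he : ∃ N : ℕ, e ^ (p ^ N) = 0) :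
    ∃ x ∈ L, e = ⁅e, ⁅e, x⁆⁆ :=
  nilpotent_mem_double_bracket_general hp V L R hcompl hinv e heL he
end

section
/- Let $\mathcal{L} \subseteq \mathfrak{gl}(V)$ be a Lie subalgebra acting irreducibly on a finite dimensional vector space $V$ over an algebraically closed field, and suppose $\mathcal{L}$ is a direct summand of $\mathfrak{gl}(V)$ as an $\mathcal{L}$-module (under the adjoint action). Then $\dim(\mathcal{L}/[\mathcal{L},\mathcal{L}]) \leq 1$. -/
attribute [local instance 100] LieRing.ofAssociativeRing

/-!
Compose a functional `λ` on `L/[L,L]` with the projection `π : gl(V) → L` along `R`. Since `R` is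
`L`-invariant, `π` is `L`-equivariant, so `λ ∘ π` vanishes on `[L, gl(V)]`. The trace pairing
identifies `λ ∘ π` with `tr (c ⬝ ·)` for some `c` commuting with `L`; by Schur's lemma `c` is a
scalar, so `λ ∘ π` is a multiple of the trace. As `π` is onto, `λ ↦ λ ∘ π` is injective, and the
dual of `L/[L,L]` embeds into the line `k ∙ tr`.
-/

open Module LinearMap

namespace Module.End

variable {k V : Type*} [Field k] [AddCommGroup V] [Module k V]

theorem exists_eq_smul_one_of_forall_commute [IsAlgClosed k] [FiniteDimensional k V]
    [Nontrivial V] {S : Set (End k V)}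
    (hirr : ∀ W : Submodule k V, (∀ x ∈ S, ∀ w ∈ W, x w ∈ W) → W = ⊥ ∨ W = ⊤)
    {c : End k V} (hc : ∀ x ∈ S, Commute c x) : ∃ a : k, c = a • 1 := by
  obtain ⟨a, ha⟩ := exists_eigenvalue c
  have hinv : ∀ x ∈ S, ∀ w ∈ c.eigenspace a, x w ∈ c.eigenspace a := by
    intro x hx w hw
    rw [mem_eigenspace_iff] at hw ⊢
    rw [← mul_apply, (hc x hx).eq, mul_apply, hw, map_smul]
  obtain hbot | htop := hirr _ hinv
  · exact absurd hbot ha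
  · refine ⟨a, LinearMap.ext fun v => ?_⟩
    simpa using mem_eigenspace_iff.mp (htop ▸ Submodule.mem_top : v ∈ c.eigenspace a)

variable (k V) in
noncomputable def traceDual : End k V →ₗ[k] Dual k (End k V) :=
  (LinearMap.mul k (End k V)).compr₂ (trace k V)

@[simp]
theorem traceDual_apply (c z : End k V) : traceDual k V c z = trace k V (c * z) := rfl

theorem traceDual_injective [FiniteDimensional k V] : Function.Injective (traceDual k V) := by
  refine (injective_iff_map_eq_zero _).mpr fun c hc => LinearMap.ext fun v => ?_
  refine (forall_dual_apply_eq_zero_iff k _).mp fun f => ?_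
  have hcomp : c * f.smulRight v = f.smulRight (c v) := by ext; simp
  simpa [hcomp, trace_smulRight] using LinearMap.congr_fun hc (f.smulRight v)

theorem traceDual_bijective [FiniteDimensional k V] : Function.Bijective (traceDual k V) :=
  ⟨traceDual_injective, (injective_iff_surjective_of_finrank_eq_finrank
    Subspace.dual_finrank_eq.symm).mp traceDual_injective⟩

theorem exists_eq_smul_trace_of_forall_mul_comm [IsAlgClosed k] [FiniteDimensional k V]
    [Nontrivial V] {S : Set (End k V)}
    (hirr : ∀ W : Submodule k V, (∀ x ∈ S, ∀ w ∈ W, x w ∈ W) → W = ⊥ ∨ W = ⊤)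
    {μ : Dual k (End k V)} (hμ : ∀ x ∈ S, ∀ z, μ (x * z) = μ (z * x)) :
    ∃ a : k, μ = a • trace k V := by
  obtain ⟨c, rfl⟩ := traceDual_bijective.surjective μ
  have hc : ∀ x ∈ S, Commute c x := fun x hx => by
    refine sub_eq_zero.mp (traceDual_injective (LinearMap.ext fun z => ?_))
    have hxz := hμ x hx z
    simp only [traceDual_apply] at hxz
    rw [map_sub, LinearMap.sub_apply, traceDual_apply, traceDual_apply, map_zero,
      LinearMap.zero_apply, sub_eq_zero, mul_assoc, hxz, ← mul_assoc, trace_mul_comm, ← mul_assoc]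
  obtain ⟨a, rfl⟩ := exists_eq_smul_one_of_forall_commute hirr hc
  exact ⟨a, LinearMap.ext fun z => by simp⟩

end Module.End

theorem LieSubalgebra.projection_lie {R E : Type*} [CommRing R] [LieRing E] [LieAlgebra R E]
    {L : LieSubalgebra R E} {M : Submodule R E} (h : IsCompl L.toSubmodule M)
    (hM : ∀ x ∈ L, ∀ m ∈ M, ⁅x, m⁆ ∈ M) {x : E} (hx : x ∈ L) (z : E) :
    L.toSubmodule.projection M h ⁅x, z⁆ = ⁅x, L.toSubmodule.projection M h z⁆ := by
  set p := L.toSubmodule.projection M h z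
  have hp : p ∈ L := Submodule.projection_apply_mem h z
  rw [← add_sub_cancel p z, lie_add, map_add,
    Submodule.projection_apply_of_mem_left h (L.lie_mem hx hp),
    Submodule.projection_apply_of_mem_right h (hM x hx _ (Submodule.sub_projection_mem h z)),
    add_zero]

theorem Module.finrank_le_finrank_of_forall_comp_mem {k E Q : Type*} [Field k]
    [AddCommGroup E] [Module k E] [FiniteDimensional k E] [AddCommGroup Q] [Module k Q]
    [FiniteDimensional k Q] {f : E →ₗ[k] Q} (hf : Function.Surjective f)
    {P : Submodule k (Dual k E)} (hP : ∀ l : Dual k Q, l ∘ₗ f ∈ P) :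
    finrank k Q ≤ finrank k P := by
  rw [← Subspace.dual_finrank_eq]
  exact LinearMap.finrank_le_finrank_of_injective (f := f.dualMap.codRestrict P hP)
    fun _ _ hl => dualMap_injective_of_surjective hf (congrArg Subtype.val hl)

/-- If `L ⊆ gl(V)` acts irreducibly on a finite dimensional vector space `V`
over an algebraically closed field and `L` is a direct summand of `gl(V)` as an
`L`-module under the adjoint action, then `dim (L/[L,L]) ≤ 1`. -/
theorem codim_derived_le_one {k V : Type*} [Field k] [IsAlgClosed k]
    [AddCommGroup V] [Module k V] [FiniteDimensional k V] [Nontrivial V]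
    (L : LieSubalgebra k (Module.End k V))
    (hirr : ∀ W : Submodule k V, (∀ x ∈ L, ∀ w ∈ W, x w ∈ W) → W = ⊥ ∨ W = ⊤)
    (R : Submodule k (Module.End k V))
    (hcompl : IsCompl L.toSubmodule R)
    (hinv : ∀ x ∈ L, ∀ r ∈ R, ⁅x, r⁆ ∈ R) :
    Module.finrank k
      (L ⧸ (LieSubmodule.toSubmodule (⁅(⊤ : LieIdeal k L), (⊤ : LieIdeal k L)⁆ : LieIdeal k L))) ≤ 1 := by
  set D := LieSubmodule.toSubmodule (⁅(⊤ : LieIdeal k L), (⊤ : LieIdeal k L)⁆ : LieIdeal k L)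
  let f : Module.End k V →ₗ[k] L ⧸ D := D.mkQ ∘ₗ L.toSubmodule.projectionOnto R hcompl
  have hf : Function.Surjective f :=
    D.mkQ_surjective.comp (Submodule.projectionOnto_surjective hcompl)
  have hf_lie : ∀ x ∈ L, ∀ z, f ⁅x, z⁆ = 0 := fun x hx z => by
    have hproj : L.toSubmodule.projectionOnto R hcompl ⁅x, z⁆ =
        ⁅(⟨x, hx⟩ : L), L.toSubmodule.projectionOnto R hcompl z⁆ :=
      Subtype.ext (LieSubalgebra.projection_lie hcompl hinv hx z)
    simp only [f, LinearMap.comp_apply, hproj, Submodule.mkQ_apply, Submodule.Quotient.mk_eq_zero]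
    exact LieSubmodule.lie_mem_lie (LieSubmodule.mem_top _) (LieSubmodule.mem_top _)
  have hspan : ∀ l : Module.Dual k (L ⧸ D), l ∘ₗ f ∈ k ∙ LinearMap.trace k V := fun l => by
    obtain ⟨a, ha⟩ := Module.End.exists_eq_smul_trace_of_forall_mul_comm hirr (μ := l ∘ₗ f)
      fun x hx z => by
        rw [← sub_eq_zero, ← map_sub, ← LieRing.of_associative_ring_bracket,
          LinearMap.comp_apply, hf_lie x hx z, map_zero]
    exact ha ▸ Submodule.smul_mem _ a (Submodule.mem_span_singleton_self _)
  calc finrank k (L ⧸ D) ≤ finrank k (k ∙ LinearMap.trace k V) :=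
        Module.finrank_le_finrank_of_forall_comp_mem hf hspan
    _ ≤ 1 := by simpa using finrank_span_le_card ({LinearMap.trace k V} : Set (Dual k _))
end

section
/- Let $\mathfrak{g}$ be a finite dimensional Lie algebra with a nondegenerate invariant symmetric bilinear form $b$ that is invariant under all derivations of $\mathfrak{g}$, such that $\operatorname{ad}: \mathfrak{g} \to \operatorname{Der}(\mathfrak{g})$ is an isomorphism. Then every $2$-cocycle $\varphi$ on $\mathfrak{g}$ with values in $\k$ has the form $\varphi(x,y) = b([h,x], y)$ for some $h \in \mathfrak{g}$; in particular, every central extension of $\mathfrak{g}$ by $\k$ is trivial. -/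
/-!
Since `b` is nondegenerate, `φ` is represented as `φ x y = b (D x) y` for a unique linear map
`D : g → g`. Invariance of `b` under inner derivations turns the cocycle identity for `φ` into the
Leibniz rule for `D`, so `D` is a derivation, hence `D = ad h` for some `h`.
-/

section CocycleDerivation

variable {R L : Type*} [CommRing R] [LieRing L] [LieAlgebra R L]

theorem cocycle_apply_lie_left {φ : L →ₗ[R] L →ₗ[R] R} (hskew : ∀ x y : L, φ x y = -φ y x)
    (hcocycle : ∀ x y z : L, φ ⁅x, y⁆ z + φ ⁅y, z⁆ x + φ ⁅z, x⁆ y = 0) (x y z : L) :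
    φ ⁅x, y⁆ z = φ x ⁅y, z⁆ - φ y ⁅x, z⁆ := by
  have h₁ : φ ⁅y, z⁆ x = -φ x ⁅y, z⁆ := hskew _ _
  have h₂ : φ ⁅z, x⁆ y = φ y ⁅x, z⁆ := by rw [hskew, ← lie_skew x z, map_neg]
  linear_combination hcocycle x y z - h₁ - h₂

theorem leibniz_of_apply_eq_cocycle {b φ : L →ₗ[R] L →ₗ[R] R} (hb : b.SeparatingLeft)
    (hinv : ∀ a x y : L, b ⁅a, x⁆ y + b x ⁅a, y⁆ = 0) (hskew : ∀ x y : L, φ x y = -φ y x)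
    (hcocycle : ∀ x y z : L, φ ⁅x, y⁆ z + φ ⁅y, z⁆ x + φ ⁅z, x⁆ y = 0)
    {D : L →ₗ[R] L} (hD : ∀ x y : L, b (D x) y = φ x y) (x y : L) :
    D ⁅x, y⁆ = ⁅x, D y⁆ - ⁅y, D x⁆ := by
  refine sub_eq_zero.mp (hb _ fun z => ?_)
  have hx : b ⁅x, D y⁆ z = -φ y ⁅x, z⁆ := by rw [← hD]; linear_combination hinv x (D y) z
  have hy : b ⁅y, D x⁆ z = -φ x ⁅y, z⁆ := by rw [← hD]; linear_combination hinv y (D x) z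
  simp only [map_sub, LinearMap.sub_apply, hD, hx, hy, cocycle_apply_lie_left hskew hcocycle]
  ring

end CocycleDerivation

theorem two_cocycle_of_invariant_form_general {k g : Type*} [Field k]
    [LieRing g] [LieAlgebra k g] [FiniteDimensional k g]
    (b : g →ₗ[k] g →ₗ[k] k)
    (hsymm : ∀ x y : g, b x y = b y x)
    (hnondeg : ∀ x : g, (∀ y : g, b x y = 0) → x = 0)
    (hder : ∀ D : LieDerivation k g g, ∀ x y : g, b (D x) y + b x (D y) = 0)
    (hinner : ∀ D : LieDerivation k g g, ∃ h : g, ∀ x : g, D x = ⁅h, x⁆) :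
    ∀ φ : g →ₗ[k] g →ₗ[k] k,
      (∀ x y : g, φ x y = -φ y x) →
      (∀ x y z : g, φ ⁅x, y⁆ z + φ ⁅y, z⁆ x + φ ⁅z, x⁆ y = 0) →
      ∃ h : g, ∀ x y : g, φ x y = b ⁅h, x⁆ y := by
  intro φ hskew hcocycle
  have hb : b.Nondegenerate :=
    (LinearMap.IsSymm.isRefl ⟨hsymm⟩).nondegenerate_iff_separatingLeft.mpr hnondeg
  have hinv (a x y : g) : b ⁅a, x⁆ y + b x ⁅a, y⁆ = 0 := by
    simpa using hder (LieDerivation.ad k g a) x y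
  let D := LinearMap.BilinForm.symmCompOfNondegenerate φ b hb
  have hD (x y : g) : b (D x) y = φ x y :=
    LinearMap.BilinForm.symmCompOfNondegenerate_left_apply φ hb y x
  obtain ⟨h, hh⟩ := hinner ⟨D, leibniz_of_apply_eq_cocycle hnondeg hinv hskew hcocycle hD⟩
  exact ⟨h, fun x y => by rw [← hD, ← hh]; rfl⟩

/-- Let `g` be a finite dimensional Lie algebra with a nondegenerate
symmetric bilinear form `b` invariant under all derivations, such that all derivations
of `g` are inner and `g` has trivial centre (so `ad : g → Der(g)` is an isomorphism).
Then every `2`-cocycle `φ` on `g` with values in `k` has the form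
`φ(x, y) = b([h, x], y)` for some `h ∈ g`. -/
theorem two_cocycle_of_invariant_form {k g : Type*} [Field k]
    [LieRing g] [LieAlgebra k g] [FiniteDimensional k g]
    (b : g →ₗ[k] g →ₗ[k] k)
    (hsymm : ∀ x y : g, b x y = b y x)
    (hnondeg : ∀ x : g, (∀ y : g, b x y = 0) → x = 0)
    (hder : ∀ D : LieDerivation k g g, ∀ x y : g, b (D x) y + b x (D y) = 0)
    (hinner : ∀ D : LieDerivation k g g, ∃ h : g, ∀ x : g, D x = ⁅h, x⁆)
    (hcenter : LieAlgebra.center k g = ⊥) :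
    ∀ φ : g →ₗ[k] g →ₗ[k] k,
      (∀ x y : g, φ x y = -φ y x) →
      (∀ x y z : g, φ ⁅x, y⁆ z + φ ⁅y, z⁆ x + φ ⁅z, x⁆ y = 0) →
      ∃ h : g, ∀ x y : g, φ x y = b ⁅h, x⁆ y :=
  two_cocycle_of_invariant_form_general b hsymm hnondeg hder hinner
end

section
/- Every faithful irreducible finite dimensional representation of $\mathfrak{gl}_{kp}$ over an algebraically closed field of characteristic $p > 0$ has dimension divisible by $p$. -/
/-!
The identity `ρ 1` commutes with the whole image of `ρ`, so by Schur's lemma it is a scalar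
`c • 1`, and `c ≠ 0` by faithfulness. Since `n * p = 0` in `K`, the identity matrix is a sum of
commutators, `1 = ∑ i, ⁅single i i₀ 1, single i₀ i 1⁆`, hence `trace (ρ 1) = 0`. Therefore
`c * finrank K V = 0` in `K`, i.e. `p ∣ finrank K V`.
-/

attribute [local instance] LieRing.ofAssociativeRing LieAlgebra.ofAssociativeAlgebra

open Module

theorem Module.End.exists_eq_smul_one_of_forall_commute_s14 {ι K V : Type*} [Field K]
    [IsAlgClosed K] [AddCommGroup V] [Module K V] [FiniteDimensional K V] (f : ι → End K V)
    (hirr : ∀ W : Submodule K V, (∀ i, ∀ w ∈ W, f i w ∈ W) → W = ⊥ ∨ W = ⊤)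
    {T : End K V} (hT : ∀ i, Commute T (f i)) : ∃ c : K, T = c • 1 := by
  cases subsingleton_or_nontrivial V
  · exact ⟨0, Subsingleton.elim _ _⟩
  obtain ⟨c, hc⟩ := End.exists_eigenvalue T
  have htop : T.eigenspace c = ⊤ :=
    (hirr _ fun i => End.mapsTo_genEigenspace_of_comm (hT i) c 1).resolve_left hc
  refine ⟨c, LinearMap.ext fun v => ?_⟩
  exact End.mem_eigenspace_iff.mp (htop ▸ Submodule.mem_top : v ∈ T.eigenspace c)

theorem Matrix.sum_lie_single_eq_one {n R : Type*} [Fintype n] [DecidableEq n] [CommRing R]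
    (hn : (Fintype.card n : R) = 0) (i₀ : n) :
    ∑ i : n, ⁅Matrix.single i i₀ (1 : R), Matrix.single i₀ i (1 : R)⁆ = 1 := by
  simp only [Ring.lie_def, Matrix.single_mul_single_same, mul_one, Finset.sum_sub_distrib,
    Matrix.sum_single_one]
  rw [Finset.sum_const, Finset.card_univ, ← Nat.cast_smul_eq_nsmul R, hn, zero_smul, sub_zero]

theorem LieHom.trace_apply_one_eq_zero {n K V : Type*} [Fintype n] [DecidableEq n] [Nonempty n]
    [Field K] [AddCommGroup V] [Module K V] (hn : (Fintype.card n : K) = 0)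
    (ρ : Matrix n n K →ₗ⁅K⁆ End K V) : LinearMap.trace K V (ρ 1) = 0 := by
  rw [← Matrix.sum_lie_single_eq_one hn (Classical.arbitrary n), map_sum, map_sum]
  simp only [LieHom.map_lie, LinearMap.trace_lie, Finset.sum_const_zero]

theorem LieHom.natCast_finrank_eq_zero_of_trace_eq_zero {K L V : Type*} [Field K]
    [IsAlgClosed K] [LieRing L] [LieAlgebra K L] [AddCommGroup V] [Module K V]
    [FiniteDimensional K V] (ρ : L →ₗ⁅K⁆ End K V)
    (hirr : ∀ W : Submodule K V, (∀ x : L, ∀ w ∈ W, ρ x w ∈ W) → W = ⊥ ∨ W = ⊤)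
    {z : L} (hz : ∀ x : L, ⁅z, x⁆ = 0) (hρz : ρ z ≠ 0) (htr : LinearMap.trace K V (ρ z) = 0) :
    (finrank K V : K) = 0 := by
  obtain ⟨c, hc⟩ := End.exists_eq_smul_one_of_forall_commute_s14 ρ hirr
    (T := ρ z) fun x => commute_iff_lie_eq.mpr (by rw [← ρ.map_lie, hz, map_zero])
  have hc0 : c ≠ 0 := by rintro rfl; exact hρz (by rw [hc, zero_smul])
  rw [hc, map_smul, End.one_eq_id, LinearMap.trace_id, smul_eq_mul] at htr
  exact (mul_eq_zero.mp htr).resolve_left hc0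

theorem dim_dvd_of_faithful_irreducible_general {K : Type*} [Field K] [IsAlgClosed K]
    {p : ℕ} [CharP K p] (hp : 0 < p) (n : ℕ) (hn : 1 ≤ n)
    (V : Type*) [AddCommGroup V] [Module K V] [FiniteDimensional K V]
    (ρ : Matrix (Fin (n * p)) (Fin (n * p)) K →ₗ⁅K⁆ Module.End K V)
    (hfaith : Function.Injective ρ)
    (hirr : ∀ W : Submodule K V,
      (∀ x : Matrix (Fin (n * p)) (Fin (n * p)) K, ∀ w ∈ W, ρ x w ∈ W) → W = ⊥ ∨ W = ⊤) :
    p ∣ Module.finrank K V := by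
  have : Nonempty (Fin (n * p)) := ⟨⟨0, Nat.mul_pos hn hp⟩⟩
  have hcard : (Fintype.card (Fin (n * p)) : K) = 0 := by
    rw [Fintype.card_fin, Nat.cast_mul, CharP.cast_eq_zero K p, mul_zero]
  have hρ1 : ρ 1 ≠ 0 := (map_ne_zero_iff ρ hfaith).mpr one_ne_zero
  exact (CharP.cast_eq_zero_iff K p _).mp <| ρ.natCast_finrank_eq_zero_of_trace_eq_zero hirr
    (fun x => commute_iff_lie_eq.mp (Commute.one_left x)) hρ1 (ρ.trace_apply_one_eq_zero hcard)

/-- Every faithful irreducible finite dimensional representation of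
`gl_{kp}` over an algebraically closed field of characteristic `p > 0` has dimension
divisible by `p`. -/
theorem dim_dvd_of_faithful_irreducible {K : Type*} [Field K] [IsAlgClosed K]
    {p : ℕ} [CharP K p] (hp : 0 < p) (n : ℕ) (hn : 1 ≤ n)
    (V : Type*) [AddCommGroup V] [Module K V] [FiniteDimensional K V] [Nontrivial V]
    (ρ : Matrix (Fin (n * p)) (Fin (n * p)) K →ₗ⁅K⁆ Module.End K V)
    (hfaith : Function.Injective ρ)
    (hirr : ∀ W : Submodule K V,
      (∀ x : Matrix (Fin (n * p)) (Fin (n * p)) K, ∀ w ∈ W, ρ x w ∈ W) → W = ⊥ ∨ W = ⊤) :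
    p ∣ Module.finrank K V :=
  dim_dvd_of_faithful_irreducible_general hp n hn V ρ hfaith hirr
end
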